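/- Let f : ℝ^p → ℝ be β-smooth, attain infimum f*, and satisfy the Polyak–Łojasiewicz inequality (1/2)‖∇f(x)‖² ≥ μ(f(x) - f*) for all x, with μ > 0. Then gradient descent iterates x_{t+1} = x_t - η∇f(x_t) with 0 < η ≤ 1/β satisfy f(x_t) - f* ≤ (1 - ημ)^t (f(x_0) - f*). -/

import Mathlib

/-!
Along the segment from `x` to `x + v` the derivative of `f` differs from `⟪∇f x, v⟫` by at most
`K s ‖v‖²`, which integrates to the descent lemma
`f (x + v) ≤ f x + ⟪∇f x, v⟫ + K/2 ‖v‖²`. For a gradient step of size `η ≤ 1/K` it gives the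
decrease `f (x - η ∇f x) ≤ f x - η/2 ‖∇f x‖²`, and the PL inequality turns this into the
contraction `f (x - η ∇f x) - f* ≤ (1 - ημ) (f x - f*)`, which is then iterated.
-/

open RealInnerProductSpace

section Descent

variable {E : Type*} [NormedAddCommGroup E] [InnerProductSpace ℝ E]

theorem LipschitzWith.inner_sub_add_smul_le {g : E → E} {K : NNReal} (hg : LipschitzWith K g)
    (x v : E) {s : ℝ} (hs : 0 ≤ s) :
    ⟪g (x + s • v) - g x, v⟫ ≤ K * s * ‖v‖ ^ 2 :=
  calc ⟪g (x + s • v) - g x, v⟫ ≤ ‖g (x + s • v) - g x‖ * ‖v‖ := real_inner_le_norm _ _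
    _ ≤ K * ‖s • v‖ * ‖v‖ := by
        gcongr
        simpa [dist_eq_norm] using hg.dist_le_mul (x + s • v) x
    _ = K * s * ‖v‖ ^ 2 := by rw [norm_smul, Real.norm_of_nonneg hs]; ring

variable [CompleteSpace E]

theorem HasGradientAt.hasDerivAt_comp_add_smul {f : E → ℝ} {f' x v : E} {s : ℝ}
    (h : HasGradientAt f f' (x + s • v)) :
    HasDerivAt (fun s : ℝ => f (x + s • v)) ⟪f', v⟫ s := by
  have hline : HasDerivAt (fun s : ℝ => x + s • v) v s := by
    simpa using ((hasDerivAt_id s).smul_const v).const_add x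
  have hcomp := h.hasFDerivAt.comp_hasDerivAt s hline
  simp only [InnerProductSpace.toDual_apply_apply] at hcomp
  exact hcomp

theorem descent_lemma {f : E → ℝ} {g : E → E} {K : NNReal}
    (hgrad : ∀ x, HasGradientAt f (g x) x) (hlip : LipschitzWith K g) (x v : E) :
    f (x + v) ≤ f x + ⟪g x, v⟫ + K / 2 * ‖v‖ ^ 2 := by
  set ψ : ℝ → ℝ := fun s => f (x + s • v) - s * ⟪g x, v⟫ - K * s ^ 2 / 2 * ‖v‖ ^ 2
  have hψ : ∀ s, HasDerivAt ψ (⟪g (x + s • v), v⟫ - ⟪g x, v⟫ - K * s * ‖v‖ ^ 2) s := by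
    intro s
    have hquad := (((hasDerivAt_pow 2 s).const_mul (K : ℝ)).div_const 2).mul_const (‖v‖ ^ 2)
    refine (((hgrad _).hasDerivAt_comp_add_smul.sub
      ((hasDerivAt_id s).mul_const ⟪g x, v⟫)).sub hquad).congr_deriv ?_
    push_cast; ring
  have hanti : AntitoneOn ψ (Set.Icc 0 1) := by
    refine antitoneOn_of_deriv_nonpos (convex_Icc 0 1)
      (fun s _ => (hψ s).continuousAt.continuousWithinAt)
      (fun s _ => (hψ s).differentiableAt.differentiableWithinAt) fun s hs => ?_
    rw [interior_Icc] at hs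
    have hinner := hlip.inner_sub_add_smul_le x v hs.1.le
    rw [inner_sub_left] at hinner
    rw [(hψ s).deriv]
    linarith
  have hψ10 := hanti (Set.left_mem_Icc.2 zero_le_one) (Set.right_mem_Icc.2 zero_le_one) zero_le_one
  simp only [ψ, one_smul, zero_smul, add_zero] at hψ10
  linarith

theorem le_sub_of_gradient_step {f : E → ℝ} {g : E → E} {K : NNReal} {η : ℝ}
    (hgrad : ∀ x, HasGradientAt f (g x) x) (hlip : LipschitzWith K g)
    (hη0 : 0 ≤ η) (hη : K * η ≤ 1) (x : E) :
    f (x - η • g x) ≤ f x - η / 2 * ‖g x‖ ^ 2 := by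
  have hdescent := descent_lemma hgrad hlip x (-η • g x)
  rw [neg_smul, ← sub_eq_add_neg, inner_neg_right, real_inner_smul_right,
    real_inner_self_eq_norm_sq, norm_neg, norm_smul, Real.norm_of_nonneg hη0] at hdescent
  nlinarith [mul_le_mul_of_nonneg_right hη (by positivity : 0 ≤ η * ‖g x‖ ^ 2)]

theorem sub_le_mul_of_gradient_step_of_PL {f : E → ℝ} {g : E → E} {K : NNReal}
    {η μ fstar : ℝ} (hgrad : ∀ x, HasGradientAt f (g x) x) (hlip : LipschitzWith K g)
    (hPL : ∀ x, (1 / 2) * ‖g x‖ ^ 2 ≥ μ * (f x - fstar))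
    (hη0 : 0 ≤ η) (hη : K * η ≤ 1) (x : E) :
    f (x - η • g x) - fstar ≤ (1 - η * μ) * (f x - fstar) := by
  nlinarith [le_sub_of_gradient_step hgrad hlip hη0 hη x, hPL x]

end Descent

theorem le_geom_of_nonneg {u : ℕ → ℝ} {c : ℝ} (hu : ∀ n, 0 ≤ u n)
    (h : ∀ n, u (n + 1) ≤ c * u n) (n : ℕ) : u n ≤ c ^ n * u 0 := by
  rcases le_or_gt 0 c with hc | hc
  · exact le_geom hc n fun k _ => h k
  · -- a negative ratio forces the nonnegative sequence to vanish
    have hu0 : u 0 = 0 := le_antisymm (by nlinarith [hu 1, h 0]) (hu 0)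
    cases n with
    | zero => simp
    | succ k => simpa [hu0] using (h k).trans (mul_nonpos_of_nonpos_of_nonneg hc.le (hu k))

theorem toNNReal_mul_le_one_of_le_one_div {β η : ℝ} (hη : η ≤ 1 / β) :
    (Real.toNNReal β : ℝ) * η ≤ 1 := by
  rcases le_or_gt β 0 with hβ | hβ
  · simp [Real.toNNReal_of_nonpos hβ]
  · rw [Real.coe_toNNReal _ hβ.le]
    exact (le_div_iff₀' hβ).1 hη

theorem stmt_2_general (p : ℕ) (f : EuclideanSpace ℝ (Fin p) → ℝ)
    (g : EuclideanSpace ℝ (Fin p) → EuclideanSpace ℝ (Fin p))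
    (β η μ fstar : ℝ)
    (hgrad : ∀ x, HasGradientAt f (g x) x)
    (hlip : LipschitzWith (Real.toNNReal β) g)
    (hinf : ∀ y, fstar ≤ f y)
    (hPL : ∀ x, (1 / 2) * ‖g x‖ ^ 2 ≥ μ * (f x - fstar))
    (hη0 : 0 < η) (hη : η ≤ 1 / β)
    (x : ℕ → EuclideanSpace ℝ (Fin p))
    (hstep : ∀ t, x (t + 1) = x t - η • g (x t)) :
    ∀ t : ℕ, f (x t) - fstar ≤ (1 - η * μ) ^ t * (f (x 0) - fstar) := by
  have hKη := toNNReal_mul_le_one_of_le_one_div hη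
  refine le_geom_of_nonneg (u := fun t => f (x t) - fstar) (fun t => sub_nonneg.2 (hinf _)) ?_
  intro t
  rw [hstep t]
  exact sub_le_mul_of_gradient_step_of_PL hgrad hlip hPL hη0.le hKη (x t)

/-- PL contraction with geometric rate: for a `β`-smooth `f` with infimum `fstar`
satisfying the Polyak–Łojasiewicz inequality, gradient descent with step size
`0 < η ≤ 1/β` satisfies `f x_t - fstar ≤ (1 - ημ)^t (f x_0 - fstar)`. -/
theorem stmt_2 (p : ℕ) (f : EuclideanSpace ℝ (Fin p) → ℝ)
    (g : EuclideanSpace ℝ (Fin p) → EuclideanSpace ℝ (Fin p))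
    (β η μ fstar : ℝ) (hβ : 0 < β) (hμ : 0 < μ)
    (hgrad : ∀ x, HasGradientAt f (g x) x)
    (hlip : LipschitzWith (Real.toNNReal β) g)
    (hinf : ∀ y, fstar ≤ f y)
    (hPL : ∀ x, (1 / 2) * ‖g x‖ ^ 2 ≥ μ * (f x - fstar))
    (hη0 : 0 < η) (hη : η ≤ 1 / β)
    (x : ℕ → EuclideanSpace ℝ (Fin p))
    (hstep : ∀ t, x (t + 1) = x t - η • g (x t)) :
    ∀ t : ℕ, f (x t) - fstar ≤ (1 - η * μ) ^ t * (f (x 0) - fstar) :=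
  stmt_2_general p f g β η μ fstar hgrad hlip hinf hPL hη0 hη x hstep
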